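/- (Theorem 2, maxmin bound.) Assume N ≥ |𝓜| + 1 and 1 ≤ k ≤ N, and let 𝔾 be a nonempty set of Borel probability measures on valuations with ambiguity set 𝔽 = {F : F̄ ∈ 𝔾}. Then inf_{F∈𝔽} E_F[Rᵏ_𝓜(v)] ≥ inf_{F∈𝔽} V_𝓜(F) − (k−1)·|𝓜|·v̄/N. -/

import Mathlib

open MeasureTheory
open scoped ENNReal BigOperators

namespace RankGuaranteedAuctions

/-- A bundle of items, where the set of items is `Fin M`. -/
abbrev Bundle (M : ℕ) := Finset (Fin M)

/-- A valuation assigns a real value to every bundle. -/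
abbrev Valuation (M : ℕ) := Bundle M → ℝ

/-- A valuation is normalized: value `0` for the empty bundle and values in `[0, vbar]`. -/
def IsValuation (M : ℕ) (vbar : ℝ) (v : Valuation M) : Prop :=
  v ∅ = 0 ∧ ∀ b : Bundle M, 0 ≤ v b ∧ v b ≤ vbar

/-- A menu is a nonempty collection of nonempty bundles. -/
def IsMenu (M : ℕ) (Menu : Finset (Bundle M)) : Prop :=
  Menu.Nonempty ∧ ∅ ∉ Menu

/-- The complete menu `2^S` of all nonempty bundles. -/
noncomputable def completeMenu (M : ℕ) : Finset (Bundle M) :=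
  Finset.univ.erase ∅

/-- A feasible allocation: a set of pairwise disjoint bundles from the menu. -/
def Feasible (M : ℕ) (Menu X : Finset (Bundle M)) : Prop :=
  X ⊆ Menu ∧ ∀ b ∈ X, ∀ b' ∈ X, b ≠ b' → Disjoint b b'

/-- The maximum of `∑ b ∈ X, f b` over feasible allocations `X` from the menu. -/
noncomputable def maxAlloc (M : ℕ) (Menu : Finset (Bundle M)) (f : Bundle M → ℝ) : ℝ :=
  sSup {y : ℝ | ∃ X : Finset (Bundle M), Feasible M Menu X ∧ y = ∑ b ∈ X, f b}

/-- The `k`-th highest value among `w 0, …, w (N-1)` (for `1 ≤ k ≤ N`):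
the maximum over sets `T` of `k` bidders of the minimum of `w` on `T`. -/
noncomputable def kthHighest (N : ℕ) (w : Fin N → ℝ) (k : ℕ) : ℝ :=
  sSup {x : ℝ | ∃ T : Finset (Fin N), T.card = k ∧ x = sInf (w '' (T : Set (Fin N)))}

/-- The `k`-th rank guarantee `R^k_𝓜(v)`. -/
noncomputable def rankGuarantee (M N : ℕ) (Menu : Finset (Bundle M))
    (v : Fin N → Valuation M) (k : ℕ) : ℝ :=
  maxAlloc M Menu fun b => kthHighest N (fun n => v n b) k

/-- The ex-post efficient surplus: the maximum over feasible allocations `X` with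
`|X| ≤ N` and injective assignments `ι` of bundles in `X` to bidders of the total value. -/
noncomputable def surplusEx (M N : ℕ) (Menu : Finset (Bundle M))
    (v : Fin N → Valuation M) : ℝ :=
  sSup {y : ℝ | ∃ X : Finset (Bundle M), Feasible M Menu X ∧ X.card ≤ N ∧
    ∃ ι : Bundle M → Fin N, Set.InjOn ι ↑X ∧ y = ∑ b ∈ X, v (ι b) b}

/-- The average `F̄ = (1/N) ∑ₙ Fₙ` of the bidder-marginals of `F`. -/
noncomputable def avgMarginal (M N : ℕ) (F : Measure (Fin N → Valuation M)) :
    Measure (Valuation M) :=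
  (N : ℝ≥0∞)⁻¹ • ∑ n : Fin N, F.map (fun v => v n)

/-- The ex-ante efficient surplus `V_𝓜(F)`. -/
noncomputable def Vsurplus (M N : ℕ) (Menu : Finset (Bundle M))
    (F : Measure (Fin N → Valuation M)) : ℝ :=
  ∫ v, surplusEx M N Menu v ∂F

/-- A Borel probability measure on valuation profiles (supported on profiles of
valuations bounded by `vbar`). -/
def ProfileOK (M N : ℕ) (vbar : ℝ) (F : Measure (Fin N → Valuation M)) : Prop :=
  IsProbabilityMeasure F ∧ F {v | ∀ n, IsValuation M vbar (v n)} = 1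

/-- A Borel probability measure on valuations (supported on valuations bounded by `vbar`). -/
def ValOK (M : ℕ) (vbar : ℝ) (G : Measure (Valuation M)) : Prop :=
  IsProbabilityMeasure G ∧ G {w | IsValuation M vbar w} = 1

/-- `κ` is a partition of the bundle `b` into nonempty, pairwise disjoint parts. -/
def IsPartitionOf (M : ℕ) (κ : Finset (Bundle M)) (b : Bundle M) : Prop :=
  (∀ c ∈ κ, c ≠ ∅) ∧ (∀ c ∈ κ, ∀ c' ∈ κ, c ≠ c' → Disjoint c c') ∧ κ.sup id = b

/-- Feasibility for homogeneous goods: total number of allocated items is at most `M`. -/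
def FeasibleQ (M : ℕ) (Menu X : Finset (Bundle M)) : Prop :=
  X ⊆ Menu ∧ ∑ b ∈ X, b.card ≤ M

/-- The maximum of `∑ b ∈ X, f b` over homogeneous-goods-feasible allocations `X`. -/
noncomputable def maxAllocQ (M : ℕ) (Menu : Finset (Bundle M)) (f : Bundle M → ℝ) : ℝ :=
  sSup {y : ℝ | ∃ X : Finset (Bundle M), FeasibleQ M Menu X ∧ y = ∑ b ∈ X, f b}

/-- An assignment of pairwise disjoint bundles to the `N` bidders. -/
def IsAssignment (M N : ℕ) (a : Fin N → Bundle M) : Prop :=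
  ∀ n n' : Fin N, n ≠ n' → Disjoint (a n) (a n')

/-- An assignment is efficient if it maximizes total value over all assignments. -/
def IsEfficient (M N : ℕ) (v : Fin N → Valuation M) (a : Fin N → Bundle M) : Prop :=
  IsAssignment M N a ∧
    ∀ a' : Fin N → Bundle M, IsAssignment M N a' → ∑ n, v n (a' n) ≤ ∑ n, v n (a n)

/-- The VCG revenue at the efficient assignment `a`: the sum over bidders `n` of
`max_{assignments to bidders other than n} ∑_{n' ≠ n} v^{n'} − ∑_{n' ≠ n} v^{n'}(a n')`. -/
noncomputable def vcgRevenue (M N : ℕ) (v : Fin N → Valuation M)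
    (a : Fin N → Bundle M) : ℝ :=
  ∑ n : Fin N,
    (sSup {y : ℝ | ∃ a' : Fin N → Bundle M, IsAssignment M N a' ∧ a' n = ∅ ∧
        y = ∑ n' ∈ Finset.univ.erase n, v n' (a' n')}
      - ∑ n' ∈ Finset.univ.erase n, v n' (a n'))

/-- An unbounded valuation: value `0` for the empty bundle and nonnegative values. -/
def IsValuationNN (M : ℕ) (v : Valuation M) : Prop :=
  v ∅ = 0 ∧ ∀ b : Bundle M, 0 ≤ v b

/-- The top-`(k-1)/N` quantile of `v b` under `G`. -/
noncomputable def quantileQ (M N k : ℕ) (G : Measure (Valuation M)) (b : Bundle M) : ℝ :=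
  sInf {q : ℝ | 0 ≤ q ∧ G {w | q < w b} ≤ ((k - 1 : ℕ) : ℝ≥0∞) / (N : ℝ≥0∞)}

/-!
Fix `F` in the ambiguity set. Under the profile in which every bidder gets the same valuation
`w ∼ F̄`, there are more bidders than menu bundles, so the efficient surplus is
`E_{F̄}[max_X ∑_{b ∈ X} w_b]`; this profile has average marginal `F̄` and so lies in the
ambiguity set as well. On the other hand, for every profile `v` and bidder `n`, the optimum
`max_X ∑_{b ∈ X} vⁿ_b` exceeds `Rᵏ(v)` by at most `∑_{b ∈ 𝓜} (vⁿ_b - v⁽ᵏ⁾_b)⁺`, and on each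
bundle at most `k - 1` bidders have a positive excess, each at most `v̄`. Summing over
bidders and integrating against `F` gives `N · E_{F̄}[max_X ∑ w] ≤ N · E_F[Rᵏ] + (k - 1)|𝓜|v̄`.
-/

open Finset

section MaxAlloc

variable {M : ℕ} {Menu : Finset (Bundle M)}

lemma feasible_empty : Feasible M Menu ∅ :=
  ⟨empty_subset _, by simp⟩

lemma maxAlloc_set_finite (f : Bundle M → ℝ) :
    {y : ℝ | ∃ X : Finset (Bundle M), Feasible M Menu X ∧ y = ∑ b ∈ X, f b}.Finite := by
  refine (Set.finite_range fun X : Finset (Bundle M) => ∑ b ∈ X, f b).subset ?_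
  rintro y ⟨X, -, rfl⟩
  exact ⟨X, rfl⟩

lemma le_maxAlloc (f : Bundle M → ℝ) {X : Finset (Bundle M)} (hX : Feasible M Menu X) :
    ∑ b ∈ X, f b ≤ maxAlloc M Menu f :=
  le_csSup (maxAlloc_set_finite f).bddAbove ⟨X, hX, rfl⟩

lemma maxAlloc_nonneg (f : Bundle M → ℝ) : 0 ≤ maxAlloc M Menu f := by
  simpa using le_maxAlloc f feasible_empty

lemma exists_feasible_maxAlloc_eq (f : Bundle M → ℝ) :
    ∃ X, Feasible M Menu X ∧ maxAlloc M Menu f = ∑ b ∈ X, f b := by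
  refine Set.Nonempty.csSup_mem ?_ (maxAlloc_set_finite f)
  exact ⟨0, ∅, feasible_empty, by simp⟩

lemma maxAlloc_le_card_mul {f : Bundle M → ℝ} {c : ℝ} (hc : 0 ≤ c) (hf : ∀ b, f b ≤ c) :
    maxAlloc M Menu f ≤ Menu.card * c := by
  obtain ⟨X, hX, hmax⟩ := exists_feasible_maxAlloc_eq (Menu := Menu) f
  calc maxAlloc M Menu f ≤ X.card • c := hmax ▸ sum_le_card_nsmul _ _ _ fun b _ => hf b
    _ ≤ Menu.card * c := by
      rw [nsmul_eq_mul]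
      gcongr
      exact hX.1

lemma maxAlloc_le_add_sum_max_sub (f g : Bundle M → ℝ) :
    maxAlloc M Menu f ≤ maxAlloc M Menu g + ∑ b ∈ Menu, max (f b - g b) 0 := by
  obtain ⟨X, hX, hmax⟩ := exists_feasible_maxAlloc_eq (Menu := Menu) f
  calc maxAlloc M Menu f = ∑ b ∈ X, (g b + (f b - g b)) := by simp [hmax]
    _ ≤ ∑ b ∈ X, g b + ∑ b ∈ X, max (f b - g b) 0 := by
      rw [← sum_add_distrib]
      gcongr
      exact le_max_left _ _
    _ ≤ maxAlloc M Menu g + ∑ b ∈ Menu, max (f b - g b) 0 := by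
      gcongr
      · exact le_maxAlloc g hX
      · exact hX.1

end MaxAlloc

section KthHighest

variable {N k : ℕ}

lemma kthHighest_set_finite (w : Fin N → ℝ) :
    {x : ℝ | ∃ T : Finset (Fin N), T.card = k ∧ x = sInf (w '' (T : Set (Fin N)))}.Finite := by
  refine (Set.finite_range fun T : Finset (Fin N) => sInf (w '' (T : Set (Fin N)))).subset ?_
  rintro x ⟨T, -, rfl⟩
  exact ⟨T, rfl⟩

lemma exists_eq_sInf_image {T : Finset (Fin N)} (hT : T.Nonempty) (w : Fin N → ℝ) :
    ∃ n ∈ T, w n = sInf (w '' (T : Set (Fin N))) :=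
  Set.Nonempty.csInf_mem (hT.to_set.image w) ((T : Set (Fin N)).toFinite.image w)

lemma exists_kthHighest_eq (hk1 : 1 ≤ k) (hkN : k ≤ N) (w : Fin N → ℝ) :
    ∃ n, kthHighest N w k = w n := by
  obtain ⟨T, -, hTcard⟩ := exists_subset_card_eq (s := (univ : Finset (Fin N))) (n := k)
    (by simpa)
  obtain ⟨T', hT'card, hkth⟩ :=
    Set.Nonempty.csSup_mem (by exact ⟨_, T, hTcard, rfl⟩) (kthHighest_set_finite (k := k) w)
  obtain ⟨n, -, hn⟩ := exists_eq_sInf_image (T := T') (card_pos.mp (by omega)) w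
  exact ⟨n, hkth.trans hn.symm⟩

lemma card_filter_kthHighest_lt_le (hk1 : 1 ≤ k) (w : Fin N → ℝ) :
    (univ.filter fun n => kthHighest N w k < w n).card ≤ k - 1 := by
  by_contra! hcard
  obtain ⟨T, hTsub, hTcard⟩ :=
    exists_subset_card_eq (s := univ.filter fun n => kthHighest N w k < w n)
      (n := k) (by omega)
  obtain ⟨n, hnT, hn⟩ := exists_eq_sInf_image (T := T) (card_pos.mp (by omega)) w
  have hle : w n ≤ kthHighest N w k :=
    hn ▸ le_csSup (kthHighest_set_finite w).bddAbove ⟨T, hTcard, rfl⟩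
  exact (mem_filter.mp (hTsub hnT)).2.not_ge hle

lemma sum_max_sub_kthHighest_le (hk1 : 1 ≤ k) (hkN : k ≤ N) {w : Fin N → ℝ} {c : ℝ}
    (hc : 0 ≤ c) (hw : ∀ n, 0 ≤ w n ∧ w n ≤ c) :
    ∑ n, max (w n - kthHighest N w k) 0 ≤ (k - 1) * c := by
  obtain ⟨m, hm⟩ := exists_kthHighest_eq hk1 hkN w
  have hkth : 0 ≤ kthHighest N w k := hm ▸ (hw m).1
  calc ∑ n, max (w n - kthHighest N w k) 0
      = ∑ n ∈ univ.filter fun n => kthHighest N w k < w n, (w n - kthHighest N w k) := by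
        rw [sum_filter]
        refine sum_congr rfl fun n _ => ?_
        split_ifs with h
        · exact max_eq_left (sub_nonneg.mpr h.le)
        · exact max_eq_right (sub_nonpos.mpr (not_lt.mp h))
    _ ≤ (univ.filter fun n => kthHighest N w k < w n).card • c :=
        sum_le_card_nsmul _ _ _ fun n _ => by linarith [(hw n).2]
    _ ≤ (k - 1) * c := by
        rw [nsmul_eq_mul]
        gcongr
        have := card_filter_kthHighest_lt_le hk1 w
        rw [← Nat.cast_one, ← Nat.cast_sub hk1]
        exact_mod_cast this

end KthHighest

lemma sum_maxAlloc_le_rankGuarantee {M N : ℕ} {vbar : ℝ} (hvbar : 0 ≤ vbar)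
    (Menu : Finset (Bundle M)) {k : ℕ} (hk1 : 1 ≤ k) (hkN : k ≤ N)
    {v : Fin N → Valuation M} (hv : ∀ n, IsValuation M vbar (v n)) :
    ∑ n, maxAlloc M Menu (v n) ≤
      N * rankGuarantee M N Menu v k + (k - 1) * Menu.card * vbar := by
  set kth : Bundle M → ℝ := fun b => kthHighest N (fun n => v n b) k
  calc ∑ n, maxAlloc M Menu (v n)
      ≤ ∑ n, (rankGuarantee M N Menu v k + ∑ b ∈ Menu, max (v n b - kth b) 0) :=
        sum_le_sum fun n _ => maxAlloc_le_add_sum_max_sub (v n) kth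
    _ = N * rankGuarantee M N Menu v k + ∑ b ∈ Menu, ∑ n, max (v n b - kth b) 0 := by
        rw [sum_add_distrib, sum_comm]
        simp
    _ ≤ N * rankGuarantee M N Menu v k + ∑ _b ∈ Menu, (k - 1) * vbar := by
        gcongr with b
        exact sum_max_sub_kthHighest_le hk1 hkN hvbar fun n => (hv n).2 b
    _ = N * rankGuarantee M N Menu v k + (k - 1) * Menu.card * vbar := by
        simp only [sum_const, nsmul_eq_mul]
        ring

section Surplus

variable {M N : ℕ} {Menu : Finset (Bundle M)}

lemma surplusEx_nonneg (hN : 0 < N) (v : Fin N → Valuation M) : 0 ≤ surplusEx M N Menu v := by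
  refine le_csSup ?_ ⟨∅, feasible_empty, by simp, fun _ => ⟨0, hN⟩, by simp, by simp⟩
  refine (Set.finite_range fun p : Finset (Bundle M) × (Bundle M → Fin N) =>
    ∑ b ∈ p.1, v (p.2 b) b).bddAbove.mono ?_
  rintro y ⟨X, -, -, ι, -, rfl⟩
  exact ⟨(X, ι), rfl⟩

lemma surplusEx_const (hN : Menu.card < N) (w : Valuation M) :
    surplusEx M N Menu (fun _ => w) = maxAlloc M Menu w := by
  unfold surplusEx maxAlloc
  congr 1
  ext y
  constructor
  · rintro ⟨X, hX, -, -, -, rfl⟩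
    exact ⟨X, hX, rfl⟩
  · rintro ⟨X, hX, rfl⟩
    have hcard : X.card ≤ N := (card_le_card hX.1).trans hN.le
    have : Nonempty (Fin N) := ⟨⟨0, by omega⟩⟩
    obtain ⟨ι, hι⟩ := Set.exists_injOn_iff_injective.mpr
      ⟨_, (Fin.castLEEmb hcard).injective.comp X.equivFin.injective⟩
    exact ⟨X, hX, hcard, ι, hι, rfl⟩

end Surplus

section Measurability

variable {α : Type*} [MeasurableSpace α]

lemma measurable_sSup_setOf_exists {ι : Type*} [Countable ι] (P : ι → Prop)
    {g : ι → α → ℝ} (hg : ∀ i, Measurable (g i)) :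
    Measurable fun x => sSup {y | ∃ i, P i ∧ y = g i x} := by
  have hrange : ∀ x, {y | ∃ i, P i ∧ y = g i x} = Set.range fun i : {i // P i} => g i x := by
    intro x
    ext y
    simp [eq_comm]
  simp_rw [hrange]
  exact Measurable.iSup fun i => hg i

variable {M N : ℕ}

lemma measurable_maxAlloc_comp (Menu : Finset (Bundle M)) {f : α → Bundle M → ℝ}
    (hf : Measurable f) : Measurable fun x => maxAlloc M Menu (f x) :=
  measurable_sSup_setOf_exists _ fun X => measurable_sum X fun _ _ => hf.eval

lemma measurable_kthHighest_comp (k : ℕ) {f : α → Fin N → ℝ} (hf : Measurable f) :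
    Measurable fun x => kthHighest N (f x) k := by
  refine measurable_sSup_setOf_exists _ fun T => ?_
  simp_rw [sInf_image']
  exact Measurable.iInf fun n => hf.eval

lemma measurable_rankGuarantee (Menu : Finset (Bundle M)) (k : ℕ) :
    Measurable fun v : Fin N → Valuation M => rankGuarantee M N Menu v k :=
  measurable_maxAlloc_comp Menu <| measurable_pi_lambda _ fun _ =>
    measurable_kthHighest_comp k <| measurable_pi_lambda _ fun n => (measurable_pi_apply n).eval

lemma measurable_surplusEx (Menu : Finset (Bundle M)) :
    Measurable fun v : Fin N → Valuation M => surplusEx M N Menu v := by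
  have hpair : ∀ v : Fin N → Valuation M, surplusEx M N Menu v =
      sSup {y | ∃ p : Finset (Bundle M) × (Bundle M → Fin N),
        (Feasible M Menu p.1 ∧ p.1.card ≤ N ∧ Set.InjOn p.2 p.1) ∧
          y = ∑ b ∈ p.1, v (p.2 b) b} := by
    intro v
    simp only [surplusEx, Prod.exists, and_assoc, exists_and_left]
  simp_rw [hpair]
  exact measurable_sSup_setOf_exists _ fun p => measurable_sum _ fun _ _ =>
    (measurable_pi_apply _).eval

lemma measurableSet_isValuation (vbar : ℝ) :
    MeasurableSet {w : Valuation M | IsValuation M vbar w} := by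
  unfold IsValuation
  measurability

lemma measurableSet_isValuation_profile (vbar : ℝ) :
    MeasurableSet {v : Fin N → Valuation M | ∀ n, IsValuation M vbar (v n)} := by
  simp only [Set.ofPred_forall]
  exact .iInter fun n => (measurableSet_isValuation vbar).preimage (measurable_pi_apply n)

end Measurability

noncomputable def diagonalProfile {M : ℕ} (N : ℕ) (G : Measure (Valuation M)) :
    Measure (Fin N → Valuation M) :=
  G.map fun w _ => w

section DiagonalProfile

variable {M N : ℕ} {G : Measure (Valuation M)}

lemma measurable_diagonal : Measurable fun (w : Valuation M) (_ : Fin N) => w := by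
  fun_prop

lemma avgMarginal_diagonalProfile (hN : N ≠ 0) : avgMarginal M N (diagonalProfile N G) = G := by
  have hmarginal : ∀ n : Fin N, (diagonalProfile N G).map (fun v => v n) = G := by
    intro n
    rw [diagonalProfile, Measure.map_map (measurable_pi_apply n) measurable_diagonal]
    exact Measure.map_id
  simp only [avgMarginal, hmarginal, sum_const, card_univ, Fintype.card_fin,
    ← Nat.cast_smul_eq_nsmul ℝ≥0∞, smul_smul]
  rw [ENNReal.inv_mul_cancel (by exact_mod_cast hN) (ENNReal.natCast_ne_top N), one_smul]

lemma profileOK_diagonalProfile {vbar : ℝ} (hG : ValOK M vbar G) :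
    ProfileOK M N vbar (diagonalProfile N G) := by
  obtain ⟨hprob, hsupp⟩ := hG
  have : IsProbabilityMeasure (diagonalProfile N G) :=
    Measure.isProbabilityMeasure_map measurable_diagonal.aemeasurable
  refine ⟨this, le_antisymm prob_le_one ?_⟩
  calc 1 = G {w | IsValuation M vbar w} := hsupp.symm
    _ ≤ G ((fun w (_ : Fin N) => w) ⁻¹' {v | ∀ n, IsValuation M vbar (v n)}) :=
        measure_mono fun w hw _ => hw
    _ ≤ diagonalProfile N G {v | ∀ n, IsValuation M vbar (v n)} :=
        Measure.le_map_apply measurable_diagonal.aemeasurable _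

lemma vsurplus_diagonalProfile {Menu : Finset (Bundle M)} (hN : Menu.card < N) :
    Vsurplus M N Menu (diagonalProfile N G) = ∫ w, maxAlloc M Menu w ∂G := by
  rw [Vsurplus, diagonalProfile, integral_map measurable_diagonal.aemeasurable
    (measurable_surplusEx Menu).aestronglyMeasurable]
  simp_rw [surplusEx_const hN]

end DiagonalProfile

lemma integral_avgMarginal {M N : ℕ} {F : Measure (Fin N → Valuation M)}
    {f : Valuation M → ℝ} (hf : Measurable f) (hfi : ∀ n, Integrable (fun v => f (v n)) F) :
    ∫ w, f w ∂avgMarginal M N F = (N : ℝ)⁻¹ * ∑ n, ∫ v, f (v n) ∂F := by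
  have hmap : ∀ n : Fin N, ∫ w, f w ∂F.map (fun v => v n) = ∫ v, f (v n) ∂F := fun n =>
    integral_map (measurable_pi_apply n).aemeasurable hf.aestronglyMeasurable
  rw [avgMarginal, integral_smul_measure, integral_finsetSum_measure, ENNReal.toReal_inv,
    ENNReal.toReal_natCast, smul_eq_mul]
  · simp_rw [hmap]
  · intro n _
    rw [integrable_map_measure hf.aestronglyMeasurable (measurable_pi_apply n).aemeasurable]
    exact hfi n

section Integrability

variable {M N : ℕ} {vbar : ℝ} {F : Measure (Fin N → Valuation M)}

lemma ProfileOK.ae_isValuation (hF : ProfileOK M N vbar F) :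
    ∀ᵐ v ∂F, ∀ n, IsValuation M vbar (v n) := by
  have := hF.1
  rw [ae_iff_measure_eq (measurableSet_isValuation_profile vbar).nullMeasurableSet,
    measure_univ]
  exact hF.2

lemma ProfileOK.integrable_maxAlloc_apply (hF : ProfileOK M N vbar F) (hvbar : 0 ≤ vbar)
    (Menu : Finset (Bundle M)) (n : Fin N) :
    Integrable (fun v => maxAlloc M Menu (v n)) F := by
  have := hF.1
  refine .of_bound (measurable_maxAlloc_comp Menu (measurable_pi_apply n)).aestronglyMeasurable
    (Menu.card * vbar) ?_
  filter_upwards [hF.ae_isValuation] with v hv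
  rw [Real.norm_of_nonneg (maxAlloc_nonneg _)]
  exact maxAlloc_le_card_mul hvbar fun b => ((hv n).2 b).2

lemma ProfileOK.integrable_rankGuarantee (hF : ProfileOK M N vbar F) (hvbar : 0 ≤ vbar)
    (Menu : Finset (Bundle M)) {k : ℕ} (hk1 : 1 ≤ k) (hkN : k ≤ N) :
    Integrable (fun v => rankGuarantee M N Menu v k) F := by
  have := hF.1
  refine .of_bound (measurable_rankGuarantee Menu k).aestronglyMeasurable
    (Menu.card * vbar) ?_
  filter_upwards [hF.ae_isValuation] with v hv
  rw [rankGuarantee, Real.norm_of_nonneg (maxAlloc_nonneg _)]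
  refine maxAlloc_le_card_mul hvbar fun b => ?_
  obtain ⟨m, hm⟩ := exists_kthHighest_eq hk1 hkN fun n => v n b
  exact hm ▸ ((hv m).2 b).2

end Integrability

lemma vsurplus_diagonalProfile_avgMarginal_le {M N : ℕ} {vbar : ℝ} (hvbar : 0 ≤ vbar)
    {Menu : Finset (Bundle M)} (hN : Menu.card < N) {k : ℕ} (hk1 : 1 ≤ k) (hkN : k ≤ N)
    {F : Measure (Fin N → Valuation M)} (hF : ProfileOK M N vbar F) :
    Vsurplus M N Menu (diagonalProfile N (avgMarginal M N F)) ≤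
      ∫ v, rankGuarantee M N Menu v k ∂F + (k - 1) * Menu.card * vbar / N := by
  have := hF.1
  have hmaxInt := hF.integrable_maxAlloc_apply hvbar Menu
  have hrankInt := hF.integrable_rankGuarantee hvbar Menu hk1 hkN
  have hN0 : (N : ℝ) ≠ 0 := by norm_cast; omega
  calc Vsurplus M N Menu (diagonalProfile N (avgMarginal M N F))
      = (N : ℝ)⁻¹ * ∫ v, ∑ n, maxAlloc M Menu (v n) ∂F := by
        rw [vsurplus_diagonalProfile hN, integral_avgMarginal (f := maxAlloc M Menu)
          (measurable_maxAlloc_comp Menu measurable_id) hmaxInt,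
          integral_finsetSum _ fun n _ => hmaxInt n]
    _ ≤ (N : ℝ)⁻¹ * ∫ v, (N * rankGuarantee M N Menu v k + (k - 1) * Menu.card * vbar) ∂F := by
        refine mul_le_mul_of_nonneg_left (integral_mono_ae
          (integrable_finsetSum _ fun n _ => hmaxInt n)
          ((hrankInt.const_mul _).add (integrable_const _)) ?_) (by positivity)
        filter_upwards [hF.ae_isValuation] with v hv
        exact sum_maxAlloc_le_rankGuarantee hvbar Menu hk1 hkN hv
    _ = ∫ v, rankGuarantee M N Menu v k ∂F + (k - 1) * Menu.card * vbar / N := by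
        rw [integral_add (hrankInt.const_mul _) (integrable_const _), integral_const_mul,
          integral_const, probReal_univ, one_smul]
        field_simp

theorem maxmin_rank_guarantee_bound_general
    (M N : ℕ) (vbar : ℝ) (hvbar : 0 ≤ vbar)
    (Menu : Finset (Bundle M))
    (hN : Menu.card + 1 ≤ N) (k : ℕ) (hk1 : 1 ≤ k) (hkN : k ≤ N)
    (GG : Set (Measure (Valuation M)))
    (hGG : ∀ G ∈ GG, ValOK M vbar G) :
    sInf ((fun F => ∫ v, rankGuarantee M N Menu v k ∂F) ''
        {F : Measure (Fin N → Valuation M) |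
          ProfileOK M N vbar F ∧ avgMarginal M N F ∈ GG}) ≥
      sInf ((fun F => Vsurplus M N Menu F) ''
        {F : Measure (Fin N → Valuation M) |
          ProfileOK M N vbar F ∧ avgMarginal M N F ∈ GG})
        - ((k : ℝ) - 1) * (Menu.card : ℝ) * vbar / (N : ℝ) := by
  set 𝔽 := {F : Measure (Fin N → Valuation M) | ProfileOK M N vbar F ∧ avgMarginal M N F ∈ GG}
  have hloss : 0 ≤ ((k : ℝ) - 1) * Menu.card * vbar / N := by
    have : 0 ≤ (k : ℝ) - 1 := sub_nonneg.mpr (by exact_mod_cast hk1)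
    positivity
  rcases 𝔽.eq_empty_or_nonempty with h𝔽 | h𝔽
  · simp only [h𝔽, Set.image_empty, Real.sInf_empty]
    linarith
  have hbdd : BddBelow ((fun F => Vsurplus M N Menu F) '' 𝔽) := by
    refine ⟨0, ?_⟩
    rintro _ ⟨F, -, rfl⟩
    exact integral_nonneg fun v => surplusEx_nonneg (by omega) v
  refine le_csInf (h𝔽.image _) ?_
  rintro _ ⟨F, ⟨hF, hFavg⟩, rfl⟩
  have hdiag : diagonalProfile N (avgMarginal M N F) ∈ 𝔽 :=
    ⟨profileOK_diagonalProfile (hGG _ hFavg), by rwa [avgMarginal_diagonalProfile (by omega)]⟩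
  linarith [csInf_le hbdd ⟨_, hdiag, rfl⟩,
    vsurplus_diagonalProfile_avgMarginal_le hvbar hN hk1 hkN hF]

/-- Theorem 2, maxmin bound: with `N ≥ |𝓜| + 1`, `1 ≤ k ≤ N`, and the
ambiguity set `𝔽 = {F : F̄ ∈ 𝔾}`,
`inf_{F∈𝔽} E_F[R^k_𝓜(v)] ≥ inf_{F∈𝔽} V_𝓜(F) − (k−1)·|𝓜|·v̄/N`. -/
theorem maxmin_rank_guarantee_bound
    (M N : ℕ) (hM : 1 ≤ M) (vbar : ℝ) (hvbar : 0 ≤ vbar)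
    (Menu : Finset (Bundle M)) (hMenu : IsMenu M Menu)
    (hN : Menu.card + 1 ≤ N) (k : ℕ) (hk1 : 1 ≤ k) (hkN : k ≤ N)
    (GG : Set (Measure (Valuation M))) (hGGne : GG.Nonempty)
    (hGG : ∀ G ∈ GG, ValOK M vbar G) :
    sInf ((fun F => ∫ v, rankGuarantee M N Menu v k ∂F) ''
        {F : Measure (Fin N → Valuation M) |
          ProfileOK M N vbar F ∧ avgMarginal M N F ∈ GG}) ≥
      sInf ((fun F => Vsurplus M N Menu F) ''
        {F : Measure (Fin N → Valuation M) |
          ProfileOK M N vbar F ∧ avgMarginal M N F ∈ GG})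
        - ((k : ℝ) - 1) * (Menu.card : ℝ) * vbar / (N : ℝ) :=
  maxmin_rank_guarantee_bound_general M N vbar hvbar Menu hN k hk1 hkN GG hGG

end RankGuaranteedAuctions
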